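/- Let (Z_j, Z_k) be a centered bivariate Gaussian vector with unit variances and correlation ρ ∈ (−1, 1). Define binary variables X_j = 1{Z_j > Δ_j} and X_k = 1{Z_k > Δ_k} for cutoffs Δ_j, Δ_k ∈ ℝ. Then the population Kendall's tau of (X_j, X_k) equals 2·(Φ_2(Δ_j, Δ_k; ρ) − Φ(Δ_j)·Φ(Δ_k)). (Bridging function for a binary–binary pair, F_bb, from Theorem 1.) -/

import Mathlib

open MeasureTheory ProbabilityTheory Real Matrix

noncomputable section

/-- Density of a centered multivariate Gaussian distribution on `ℝ^d`
with covariance matrix `S`. -/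
def mvGaussPDF {d : ℕ} (S : Matrix (Fin d) (Fin d) ℝ) (x : Fin d → ℝ) : ℝ :=
  (Real.sqrt ((2 * Real.pi) ^ d * S.det))⁻¹ * Real.exp (-(x ⬝ᵥ S⁻¹ *ᵥ x) / 2)

/-- Centered multivariate Gaussian measure on `ℝ^d` with covariance matrix `S`. -/
def mvGauss {d : ℕ} (S : Matrix (Fin d) (Fin d) ℝ) : Measure (Fin d → ℝ) :=
  MeasureTheory.volume.withDensity fun x => ENNReal.ofReal (mvGaussPDF S x)

/-- `Φ_d(a; S) = P(U₁ ≤ a₁, …, U_d ≤ a_d)` for a centered Gaussian vector `U` with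
covariance matrix `S`.  Extended-real bounds implement the conventions that a `+∞`
bound drops the corresponding constraint, while a `-∞` bound gives probability `0`. -/
def PhiVec {d : ℕ} (a : Fin d → EReal) (S : Matrix (Fin d) (Fin d) ℝ) : ℝ :=
  (mvGauss S {x | ∀ i, (x i : EReal) ≤ a i}).toReal

/-- Standard normal CDF `Φ`, with extended-real argument (`Φ(+∞) = 1`, `Φ(-∞) = 0`). -/
def stdPhi (a : EReal) : ℝ :=
  (gaussianReal 0 1 {x : ℝ | (x : EReal) ≤ a}).toReal

/-- The `2 × 2` correlation matrix with correlation `ρ`. -/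
def corrMat (ρ : ℝ) : Matrix (Fin 2) (Fin 2) ℝ := !![1, ρ; ρ, 1]

/-- Bivariate standard normal CDF `Φ₂(a, b; ρ)` with extended-real bounds. -/
def Phi2 (a b : EReal) (ρ : ℝ) : ℝ := PhiVec ![a, b] (corrMat ρ)

/-- The binary variable `1{z > Δ}` obtained by dichotomizing a latent variable `z`. -/
def binVar (Δ : ℝ) (z : ℝ) : ℝ := if Δ < z then 1 else 0

/-- The truncated variable `z · 1{z > Δ}` obtained by truncating a latent variable `z`. -/
def truncVar (Δ : ℝ) (z : ℝ) : ℝ := if Δ < z then z else 0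

/-- The ordinal variable `∑_{m=0}^{l-1} m · 1{Δ_m ≤ z < Δ_{m+1}}` obtained from a latent
variable `z` via extended-real cutoffs `Δ`. -/
def ordVar (l : ℕ) (Δ : ℕ → EReal) (z : ℝ) : ℝ :=
  ∑ m ∈ Finset.range l,
    (m : ℝ) * (if Δ m ≤ (z : EReal) ∧ (z : EReal) < Δ (m + 1) then 1 else 0)

/-! Since `binVar Δ z = 1 - 1{z ≤ Δ}` and each factor lies in `{-1, 0, 1}`, the sign is the
product itself, and for the independent copies `Z, Z'` the expectation of
`(f Z - f Z') (g Z - g Z')` is `2 Cov(f Z, g Z)`. With `f = 1{z₀ ≤ Δⱼ}`, `g = 1{z₁ ≤ Δₖ}` this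
covariance is `Φ₂(Δⱼ, Δₖ; ρ) - Φ(Δⱼ) Φ(Δₖ)` as soon as both marginals of the bivariate normal
are standard normal. The first marginal comes from factoring the density as
`φ(x₀) · φ_{ρ x₀, 1 - ρ²}(x₁)` and integrating out `x₁`; the second follows because the density
is invariant under swapping the coordinates. -/

lemma corrMat_det (ρ : ℝ) : (corrMat ρ).det = 1 - ρ ^ 2 := by
  simp [corrMat, Matrix.det_fin_two_of]; ring

-- At `ρ = ±1` both sides are `0`, by `Ring.inverse 0 = 0` and `x / 0 = 0`.
lemma dotProduct_corrMat_inv_mulVec (ρ : ℝ) (x : Fin 2 → ℝ) :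
    x ⬝ᵥ (corrMat ρ)⁻¹ *ᵥ x = (x 0 ^ 2 - 2 * ρ * x 0 * x 1 + x 1 ^ 2) / (1 - ρ ^ 2) := by
  rw [Matrix.inv_def, corrMat_det, Ring.inverse_eq_inv', corrMat, Matrix.adjugate_fin_two_of]
  simp [Matrix.mulVec, dotProduct, Fin.sum_univ_two]
  ring

lemma ofReal_mvGaussPDF_corrMat {ρ : ℝ} (hρ : ρ ∈ Set.Ioo (-1 : ℝ) 1) (x : Fin 2 → ℝ) :
    ENNReal.ofReal (mvGaussPDF (corrMat ρ) x)
      = gaussianPDF 0 1 (x 0) * gaussianPDF (ρ * x 0) (1 - ρ ^ 2).toNNReal (x 1) := by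
  have hv : 0 < 1 - ρ ^ 2 := by nlinarith [hρ.1, hρ.2]
  rw [gaussianPDF, gaussianPDF, ← ENNReal.ofReal_mul (gaussianPDFReal_nonneg _ _ _)]
  congr 1
  have hsqrt : √((2 * π) ^ 2 * (1 - ρ ^ 2)) = √(2 * π * 1) * √(2 * π * (1 - ρ ^ 2)) := by
    rw [← Real.sqrt_mul (by positivity)]; ring_nf
  have hexp : -((x 0 ^ 2 - 2 * ρ * x 0 * x 1 + x 1 ^ 2) / (1 - ρ ^ 2)) / 2
      = -(x 0 - 0) ^ 2 / (2 * 1) + -(x 1 - ρ * x 0) ^ 2 / (2 * (1 - ρ ^ 2)) := by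
    field_simp; ring
  rw [mvGaussPDF, dotProduct_corrMat_inv_mulVec, corrMat_det, hexp, Real.exp_add, hsqrt,
    gaussianPDFReal, gaussianPDFReal, Real.coe_toNNReal _ hv.le, NNReal.coe_one, mul_inv]
  ring

lemma mvGaussPDF_corrMat_comp_swap (ρ : ℝ) (x : Fin 2 → ℝ) :
    mvGaussPDF (corrMat ρ) (x ∘ Equiv.swap 0 1) = mvGaussPDF (corrMat ρ) x := by
  simp only [mvGaussPDF, dotProduct_corrMat_inv_mulVec, Function.comp_apply,
    Equiv.swap_apply_left, Equiv.swap_apply_right]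
  ring_nf

lemma map_comp_swap_mvGauss_corrMat (ρ : ℝ) :
    (mvGauss (corrMat ρ)).map (fun x => x ∘ Equiv.swap 0 1) = mvGauss (corrMat ρ) := by
  have hσ : ⇑(MeasurableEquiv.piCongrLeft (fun _ : Fin 2 => ℝ) (Equiv.swap 0 1))
      = fun x => x ∘ Equiv.swap 0 1 := by
    ext x i
    simp [MeasurableEquiv.piCongrLeft, Equiv.piCongrLeft_apply_eq_cast]
  have hvol : MeasurePreserving (fun x : Fin 2 → ℝ => x ∘ Equiv.swap 0 1) :=
    hσ ▸ volume_measurePreserving_piCongrLeft _ _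
  have hemb : MeasurableEmbedding (fun x : Fin 2 → ℝ => x ∘ Equiv.swap 0 1) :=
    hσ ▸ MeasurableEquiv.measurableEmbedding _
  ext s hs
  rw [Measure.map_apply hvol.measurable hs, mvGauss, withDensity_apply _ (hvol.measurable hs),
    withDensity_apply _ hs, ← hvol.setLIntegral_comp_preimage_emb hemb _ s]
  simp only [mvGaussPDF_corrMat_comp_swap]

lemma mvGauss_corrMat_map_eval_zero {ρ : ℝ} (hρ : ρ ∈ Set.Ioo (-1 : ℝ) 1) :
    (mvGauss (corrMat ρ)).map (fun x => x 0) = gaussianReal 0 1 := by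
  have hv : (1 - ρ ^ 2).toNNReal ≠ 0 := by
    rw [ne_eq, Real.toNNReal_eq_zero, not_le]; nlinarith [hρ.1, hρ.2]
  set e := MeasurableEquiv.piFinTwo fun _ => ℝ
  ext s hs
  rw [Measure.map_apply (measurable_pi_apply 0) hs, mvGauss,
    withDensity_apply _ (measurable_pi_apply 0 hs), gaussianReal_apply 0 one_ne_zero s]
  have hpre : (fun x : Fin 2 → ℝ => x 0) ⁻¹' s = e ⁻¹' (s ×ˢ Set.univ) := by
    ext x; simp [e]
  simp_rw [ofReal_mvGaussPDF_corrMat hρ, hpre]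
  refine ((volume_preserving_piFinTwo fun _ => ℝ).setLIntegral_comp_preimage_emb
    e.measurableEmbedding
    (fun p => gaussianPDF 0 1 p.1 * gaussianPDF (ρ * p.1) (1 - ρ ^ 2).toNNReal p.2) _).trans ?_
  rw [Measure.volume_eq_prod, setLIntegral_prod _ (by fun_prop)]
  refine setLIntegral_congr_fun hs fun a _ => ?_
  dsimp only
  rw [Measure.restrict_univ, lintegral_const_mul _ (measurable_gaussianPDF _ _),
    lintegral_gaussianPDF_eq_one _ hv, mul_one]

lemma mvGauss_corrMat_map_eval {ρ : ℝ} (hρ : ρ ∈ Set.Ioo (-1 : ℝ) 1) (i : Fin 2) :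
    (mvGauss (corrMat ρ)).map (fun x => x i) = gaussianReal 0 1 := by
  fin_cases i
  · exact mvGauss_corrMat_map_eval_zero hρ
  · rw [← map_comp_swap_mvGauss_corrMat ρ, Measure.map_map (by fun_prop) (by fun_prop)]
    exact mvGauss_corrMat_map_eval_zero hρ

section IndependentCopies

variable {Ω E : Type*} [MeasurableSpace Ω] [MeasurableSpace E] {μ : Measure Ω} {ν : Measure E}
  {X X' : Ω → E}

lemma integral_sub_mul_sub_of_indepFun (hX : Measurable X) (hX' : Measurable X')
    (hXν : μ.map X = ν) (hX'ν : μ.map X' = ν) (hind : IndepFun X X' μ) {f g : E → ℝ}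
    (hf : Measurable f) (hg : Measurable g) (hfi : Integrable f ν) (hgi : Integrable g ν)
    (hfgi : Integrable (fun x => f x * g x) ν) :
    ∫ ω, (f (X ω) - f (X' ω)) * (g (X ω) - g (X' ω)) ∂μ
      = 2 * (∫ x, f x * g x ∂ν - (∫ x, f x ∂ν) * ∫ x, g x ∂ν) := by
  have integral_comp_eq : ∀ {Y : Ω → E}, Measurable Y → μ.map Y = ν →
      ∀ {h : E → ℝ}, Measurable h → ∫ ω, h (Y ω) ∂μ = ∫ x, h x ∂ν := fun hY hYν _ hh => by
    rw [← hYν, integral_map hY.aemeasurable hh.aestronglyMeasurable]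
  have integrable_comp : ∀ {Y : Ω → E}, Measurable Y → μ.map Y = ν → ∀ {h : E → ℝ},
      Integrable h ν → Integrable (fun ω => h (Y ω)) μ := fun hY hYν _ hh =>
    (hYν ▸ hh).comp_measurable hY
  have hfX := integrable_comp hX hXν hfi
  have hgX := integrable_comp hX hXν hgi
  have hfX' := integrable_comp hX' hX'ν hfi
  have hgX' := integrable_comp hX' hX'ν hgi
  have hfgX := integrable_comp hX hXν hfgi
  have hfgX' := integrable_comp hX' hX'ν hfgi
  have hexpand : (fun ω => (f (X ω) - f (X' ω)) * (g (X ω) - g (X' ω)))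
      = fun ω => (f (X ω) * g (X ω) + f (X' ω) * g (X' ω))
          - (f (X ω) * g (X' ω) + f (X' ω) * g (X ω)) := by
    ext ω; ring
  have hcross : Integrable (fun ω => f (X ω) * g (X' ω)) μ :=
    (hind.comp hf hg).integrable_mul hfX hgX'
  have hcross' : Integrable (fun ω => f (X' ω) * g (X ω)) μ :=
    (hind.symm.comp hf hg).integrable_mul hfX' hgX
  rw [hexpand, integral_sub (hfgX.fun_add hfgX') (hcross.fun_add hcross'),
    integral_add hfgX hfgX', integral_add hcross hcross',
    hind.integral_fun_comp_mul_comp hX.aemeasurable hX'.aemeasurable hf.aestronglyMeasurable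
      hg.aestronglyMeasurable,
    hind.symm.integral_fun_comp_mul_comp hX'.aemeasurable hX.aemeasurable hf.aestronglyMeasurable
      hg.aestronglyMeasurable,
    integral_comp_eq hX hXν hf, integral_comp_eq hX hXν hg, integral_comp_eq hX' hX'ν hf,
    integral_comp_eq hX' hX'ν hg, integral_comp_eq hX hXν (h := fun x => f x * g x) (hf.mul hg),
    integral_comp_eq hX' hX'ν (h := fun x => f x * g x) (hf.mul hg)]
  ring

lemma integral_indicator_sub_mul_indicator_sub_of_indepFun [IsFiniteMeasure ν]
    (hX : Measurable X) (hX' : Measurable X') (hXν : μ.map X = ν) (hX'ν : μ.map X' = ν)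
    (hind : IndepFun X X' μ) {A B : Set E} (hA : MeasurableSet A) (hB : MeasurableSet B) :
    ∫ ω, (A.indicator 1 (X ω) - A.indicator 1 (X' ω))
        * (B.indicator 1 (X ω) - B.indicator 1 (X' ω)) ∂μ
      = 2 * (ν.real (A ∩ B) - ν.real A * ν.real B) := by
  have hAi : Integrable (A.indicator (1 : E → ℝ)) ν := (integrable_const 1).indicator hA
  have hBi : Integrable (B.indicator (1 : E → ℝ)) ν := (integrable_const 1).indicator hB
  have hAB : (fun x => A.indicator (1 : E → ℝ) x * B.indicator 1 x)
      = (A ∩ B).indicator 1 := by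
    rw [Set.inter_indicator_one]; rfl
  rw [integral_sub_mul_sub_of_indepFun hX hX' hXν hX'ν hind (measurable_one.indicator hA)
    (measurable_one.indicator hB) hAi hBi (hAB ▸ (integrable_const 1).indicator (hA.inter hB)),
    hAB, integral_indicator_one (hA.inter hB), integral_indicator_one hA,
    integral_indicator_one hB]

end IndependentCopies

lemma sign_binVar_sub_mul_binVar_sub (a b x x' y y' : ℝ) :
    Real.sign ((binVar a x - binVar a x') * (binVar b y - binVar b y'))
      = ((Set.Iic a).indicator 1 x - (Set.Iic a).indicator 1 x')
        * ((Set.Iic b).indicator 1 y - (Set.Iic b).indicator 1 y') := by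
  simp only [binVar, Set.indicator, Set.mem_Iic, Pi.one_apply]
  split_ifs <;> first | (exfalso; linarith) | norm_num [Real.sign]

lemma stdPhi_coe (a : ℝ) : stdPhi a = (gaussianReal 0 1).real (Set.Iic a) := by
  simp [stdPhi, measureReal_def, Set.Iic, EReal.coe_le_coe_iff]

lemma Phi2_coe (a b : ℝ) (ρ : ℝ) :
    Phi2 a b ρ = (mvGauss (corrMat ρ)).real
      ((fun x => x 0) ⁻¹' Set.Iic a ∩ (fun x => x 1) ⁻¹' Set.Iic b) := by
  simp [Phi2, PhiVec, measureReal_def, Fin.forall_fin_two, Set.Iic, Set.preimage,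
    Set.ofPred_and]

lemma mvGauss_corrMat_real_eval_Iic {ρ : ℝ} (hρ : ρ ∈ Set.Ioo (-1 : ℝ) 1) (i : Fin 2)
    (a : ℝ) :
    (mvGauss (corrMat ρ)).real ((fun x => x i) ⁻¹' Set.Iic a) = stdPhi a := by
  rw [stdPhi_coe, ← mvGauss_corrMat_map_eval hρ i,
    map_measureReal_apply (measurable_pi_apply i) measurableSet_Iic]

/-- bridging function for a binary–binary pair,
`F_bb(ρ; Δⱼ, Δₖ) = 2(Φ₂(Δⱼ, Δₖ; ρ) − Φ(Δⱼ)Φ(Δₖ))` (Theorem 1). -/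
theorem kendall_tau_binary_binary
    {Ω : Type*} [MeasurableSpace Ω] (μ : Measure Ω) [IsProbabilityMeasure μ]
    (ρ : ℝ) (hρ : ρ ∈ Set.Ioo (-1 : ℝ) 1) (Δj Δk : ℝ)
    (Z Z' : Ω → Fin 2 → ℝ) (hZm : Measurable Z) (hZ'm : Measurable Z')
    (hZ : Measure.map Z μ = mvGauss (corrMat ρ))
    (hZ' : Measure.map Z' μ = mvGauss (corrMat ρ))
    (hind : IndepFun Z Z' μ) :
    ∫ ω, Real.sign ((binVar Δj (Z ω 0) - binVar Δj (Z' ω 0)) *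
        (binVar Δk (Z ω 1) - binVar Δk (Z' ω 1))) ∂μ
      = 2 * (Phi2 (Δj : EReal) (Δk : EReal) ρ - stdPhi (Δj : EReal) * stdPhi (Δk : EReal)) := by
  have : IsProbabilityMeasure (mvGauss (corrMat ρ)) :=
    hZ ▸ Measure.isProbabilityMeasure_map hZm.aemeasurable
  simp only [sign_binVar_sub_mul_binVar_sub]
  rw [Phi2_coe, ← mvGauss_corrMat_real_eval_Iic hρ 0, ← mvGauss_corrMat_real_eval_Iic hρ 1]
  exact integral_indicator_sub_mul_indicator_sub_of_indepFun hZm hZ'm hZ hZ' hind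
    (measurable_pi_apply 0 measurableSet_Iic) (measurable_pi_apply 1 measurableSet_Iic)
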